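/- Let (⋯ →f₁→ X₁ →f₀→ X₀) be an inverse sequence of complete metric spaces and uniformly continuous maps, and let L ⊆ ∏ᵢ Xᵢ be its inverse limit. If fᵢ(Xᵢ₊₁) is dense in Xᵢ for every i, then the image of the projection L → X₀ is dense in X₀. -/

import Mathlib

/-!
Fix `x ∈ X₀`. Starting from `y₀ = x`, choose inductively `y_{n+1} ∈ X_{n+1}` with `f_n y_{n+1}`
so close to `y_n` that, by continuity of the finitely many composites `fⁿᵢ` (`i ≤ n`), each
`f^{n+1}ᵢ y_{n+1}` lies within `ε / 2^(n+2)` of `fⁿᵢ y_n`. For every `i` the points `fⁿᵢ y_n`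
then form a Cauchy sequence in `Xᵢ`; by completeness their limits exist, they are compatible
with the `fᵢ` by continuity, and the limit at level `0` lies within `ε / 2` of `x`.
-/

open Filter Topology

section ThreadThrough

variable {X : ℕ → Type*} (f : ∀ i, X (i + 1) → X i) (c : ∀ i, X i)

/-- The family `(fⁿ₀ a, …, fⁿₙ₋₁ a, a, c (n + 1), c (n + 2), …)`. -/
def threadThrough : ∀ n, X n → ∀ i, X i
  | 0, a => Function.update c 0 a
  | n + 1, a => Function.update (threadThrough n (f n a)) (n + 1) a

theorem threadThrough_self (n : ℕ) (a : X n) : threadThrough f c n a n = a := by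
  cases n <;> simp [threadThrough]

theorem threadThrough_succ_of_le {n i : ℕ} (hi : i ≤ n) (a : X (n + 1)) :
    threadThrough f c (n + 1) a i = threadThrough f c n (f n a) i :=
  Function.update_of_ne (by omega) _ _

theorem map_threadThrough {n i : ℕ} (hi : i < n) (a : X n) :
    f i (threadThrough f c n a (i + 1)) = threadThrough f c n a i := by
  induction n with
  | zero => omega
  | succ n ih =>
    rcases (Nat.lt_succ_iff.mp hi).lt_or_eq with hi | rfl
    · rw [threadThrough_succ_of_le f c hi, threadThrough_succ_of_le f c hi.le, ih hi]
    · rw [threadThrough_self, threadThrough_succ_of_le f c le_rfl, threadThrough_self]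

theorem continuous_threadThrough [∀ i, TopologicalSpace (X i)] (hf : ∀ i, Continuous (f i))
    (n : ℕ) : Continuous (threadThrough f c n) := by
  induction n with
  | zero => exact continuous_const.update 0 continuous_id
  | succ n ih => exact (ih.comp (hf n)).update (n + 1) continuous_id

end ThreadThrough

theorem nonempty_of_denseRange {X : ℕ → Type*} [∀ i, TopologicalSpace (X i)]
    {f : ∀ i, X (i + 1) → X i} (hd : ∀ i, DenseRange (f i)) [Nonempty (X 0)] :
    ∀ i, Nonempty (X i)
  | 0 => inferInstance
  | i + 1 => have := nonempty_of_denseRange hd i; (hd i).nonempty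

theorem exists_threadThrough_succ_near {X : ℕ → Type*} [∀ i, PseudoMetricSpace (X i)]
    (f : ∀ i, X (i + 1) → X i) (c : ∀ i, X i) (hf : ∀ i, Continuous (f i))
    (hd : ∀ i, DenseRange (f i)) (n : ℕ) (y : X n) {δ : ℝ} (hδ : 0 < δ) :
    ∃ a : X (n + 1), ∀ i ≤ n,
      dist (threadThrough f c n y i) (threadThrough f c (n + 1) a i) < δ := by
  have hnear : ∀ᶠ b in 𝓝 y, ∀ i ∈ Set.Iic n,
      dist (threadThrough f c n y i) (threadThrough f c n b i) < δ := by
    refine (eventually_all_finite (Set.finite_Iic n)).mpr fun i _ => ?_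
    have hcont := (continuous_apply i).comp (continuous_threadThrough f c hf n)
    filter_upwards [hcont.tendsto y (Metric.ball_mem_nhds _ hδ)] with b hb
    exact (dist_comm _ _).trans_lt hb
  obtain ⟨_, ⟨a, rfl⟩, ha⟩ := (hd n).inter_nhds_nonempty hnear
  exact ⟨a, fun i hi => by rw [threadThrough_succ_of_le f c hi]; exact ha i hi⟩

theorem exists_thread_near_of_le_geometric_two {X : ℕ → Type*} [∀ i, MetricSpace (X i)]
    [∀ i, CompleteSpace (X i)] {f : ∀ i, X (i + 1) → X i} (hf : ∀ i, Continuous (f i))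
    (h : ℕ → ∀ i, X i) (hthread : ∀ n i, i < n → f i (h n (i + 1)) = h n i) {C : ℝ}
    (hclose : ∀ n i, i ≤ n → dist (h n i) (h (n + 1) i) ≤ C / 2 / 2 ^ n) :
    ∃ g : ∀ i, X i, (∀ i, f i (g (i + 1)) = g i) ∧ dist (h 0 0) (g 0) ≤ C := by
  have hcauchy (i : ℕ) : CauchySeq fun n => h (n + i) i :=
    cauchySeq_of_le_geometric_two (C := C / 2 ^ i) fun n => by
      rw [Nat.add_right_comm]
      refine (hclose (n + i) i (by omega)).trans_eq ?_
      rw [pow_add]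
      ring
  choose g hg using fun i => cauchySeq_tendsto_of_complete (hcauchy i)
  have hlim (i : ℕ) : Tendsto (fun n => h n i) atTop (𝓝 (g i)) :=
    (tendsto_add_atTop_iff_nat i).mp (hg i)
  refine ⟨g, fun i => tendsto_nhds_unique (((hf i).tendsto _).comp (hlim (i + 1))) ?_, ?_⟩
  · exact (hlim i).congr' <| eventually_atTop.mpr ⟨i + 1, fun n hn => (hthread n i hn).symm⟩
  · exact dist_le_of_le_geometric_two_of_tendsto₀ (fun n => hclose n 0 n.zero_le) (hlim 0)

theorem dense_image_of_invLim_of_denseRange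
    {X : ℕ → Type} [∀ i, MetricSpace (X i)] [∀ i, CompleteSpace (X i)]
    (f : ∀ i, X (i + 1) → X i)
    (huc : ∀ i, UniformContinuous (f i))
    (hd : ∀ i, Dense (Set.range (f i))) :
    Dense (Set.range
      (fun g : {g : ∀ i, X i // ∀ i, f i (g (i + 1)) = g i} => g.1 0)) := by
  have hf (i : ℕ) : Continuous (f i) := (huc i).continuous
  refine Metric.dense_iff.mpr fun x ε hε => ?_
  have : Nonempty (X 0) := ⟨x⟩
  let c (i : ℕ) : X i := (nonempty_of_denseRange hd i).some
  choose next hnext using fun n (y : X n) =>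
    exists_threadThrough_succ_near f c hf hd n y (δ := ε / 2 / 2 / 2 ^ n) (by positivity)
  let y (n : ℕ) : X n := Nat.rec (motive := X) x next n
  obtain ⟨g, hg, hdist⟩ := exists_thread_near_of_le_geometric_two hf
    (fun n => threadThrough f c n (y n)) (fun n i hi => map_threadThrough f c hi (y n))
    (C := ε / 2) fun n i hi => (hnext n (y n) i hi).le
  refine ⟨g 0, ?_, ⟨g, hg⟩, rfl⟩
  have hx : dist x (g 0) ≤ ε / 2 := by rwa [threadThrough_self] at hdist
  rw [Metric.mem_ball, dist_comm]
  linarith
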